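/- arXiv:2110.03258 — 2 statements merged into one kernel-verified Lean document; each statement's English description precedes it below -/
import Mathlib

section
/- Fix integers K, N > 0 and a, b with m = a*N − b*K > 0, and suppose gcd(K, a) = 1. Let ≈ be the translation equivalence on DPT(K,N,a,b): σ ≈ τ if and only if there exist i, j ∈ ℤ with τ(x,y) = σ(x−i, y−j) for all (x,y). Then the quotient DPT(K,N,a,b)/≈ is finite of cardinality at most K^(m−1). Equivalently, the set of σ ∈ DPT(K,N,a,b) with σ(0,0) = 0 has at most K^(m−1) elements. -/
/-!
Write `m = aN - bK` and `Λ = ℤ(K, -N) + ℤ(a, -b)`, a lattice of index `m` in `ℤ²`. Translating by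
`Λ` changes `σ` by multiples of `m`, so `σ mod m` factors through `ℤ²/Λ ≅ ℤ/m`; being surjective,
it is a bijection there. Hence equal entries of `σ` differ by a multiple of `(K, -N)`, and each
`v ∈ ℤ` occurs exactly in the columns of one residue class `c(v)` mod `K`, with `c(v + m) = c(v) + a`
and `c(0) = 0` once `σ(0,0) = 0`. The classes fix the entries of column `0`, which is a strictly
increasing enumeration of them pinned by `σ(0,0) = 0`, and since `gcd(K, a) = 1` column `0`
determines `σ` by periodicity. So `σ` is determined by `c(1), …, c(m - 1) ∈ ℤ/K`.
-/

/-- A standard doubly periodic tableau with respect to `(K, N, a, b)`. -/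
def IsDPT (K N a b : ℤ) (σ : ℤ × ℤ → ℤ) : Prop :=
  Function.Surjective σ ∧
  (∀ x y : ℤ, σ (x + K, y - N) = σ (x, y)) ∧
  (∀ x y : ℤ, σ (x + a, y - b) = σ (x, y) + (a * N - b * K)) ∧
  (∀ x y : ℤ, σ (x, y) < σ (x + 1, y)) ∧
  (∀ x y : ℤ, σ (x, y) < σ (x, y + 1))

open Function

theorem Function.FactorsThrough.symm_of_surjective {α β : Type*} [Finite β] {f g : α → β}
    (h : g.FactorsThrough f) (hg : Surjective g) : f.FactorsThrough g := by
  have hφ : ∀ x, extend f g id (f x) = g x := h.extend_apply id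
  have hinj : Injective (extend f g id) := Finite.injective_iff_surjective.mpr fun z ↦
    let ⟨x, hx⟩ := hg z
    ⟨f x, (hφ x).trans hx⟩
  exact fun x y hxy ↦ hinj ((hφ x).trans (hxy.trans (hφ y).symm))

theorem StrictMono.eq_of_range_eq {β : Type*} [LinearOrder β] {f g : ℤ → β}
    (hf : StrictMono f) (hg : StrictMono g) (hr : Set.range f = Set.range g) (h0 : f 0 = g 0) :
    f = g := by
  let e : ℤ ≃o ℤ :=
    (hf.orderIso f).trans ((OrderIso.setCongr _ _ hr).trans (hg.orderIso g).symm)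
  have he : ∀ n, g (e n) = f n := fun n ↦
    congrArg Subtype.val ((hg.orderIso g).apply_symm_apply _)
  have he0 : e 0 = 0 := hg.injective (by rw [he, h0])
  have hsucc : ∀ n, e (n + 1) = e n + 1 := by simpa [Order.succ_eq_add_one] using e.map_succ
  have hid : ∀ n, e n = n := fun n ↦ by
    simpa [he0] using AddConstMapClass.map_add_int (AddConstMap.mk e hsucc) 0 n
  funext n
  rw [← he, hid]

/-- For a DPT, `v` occurs exactly in the columns of this residue class mod `K`, whichever preimage
`invFun` picks (`IsDPT.exists_map_eq_iff_columnClass`). -/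
noncomputable def columnClass (K : ℤ) (σ : ℤ × ℤ → ℤ) (v : ℤ) : ZMod K.natAbs :=
  ((invFun σ v).1 : ZMod K.natAbs)

namespace IsDPT

variable {K N a b : ℤ} {σ τ : ℤ × ℤ → ℤ}

theorem map_add_lattice (hσ : IsDPT K N a b σ) (p : ℤ × ℤ) (i j : ℤ) :
    σ (p + i • (K, -N) + j • (a, -b)) = σ p + j * (a * N - b * K) := by
  have hK : ∀ q : ℤ × ℤ, σ (q + (K, -N)) = σ q + 0 := fun (x, y) ↦ by
    simpa [sub_eq_add_neg] using hσ.2.1 x y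
  have ha : ∀ q : ℤ × ℤ, σ (q + (a, -b)) = σ q + (a * N - b * K) := fun (x, y) ↦ by
    simpa [sub_eq_add_neg] using hσ.2.2.1 x y
  have hi : σ (p + i • (K, -N)) = σ p + i • 0 :=
    AddConstMapClass.map_add_zsmul (AddConstMap.mk σ hK) p i
  have hj : σ (p + i • (K, -N) + j • (a, -b)) = σ (p + i • (K, -N)) + j • (a * N - b * K) :=
    AddConstMapClass.map_add_zsmul (AddConstMap.mk σ ha) _ j
  rw [hj, hi, smul_zero, add_zero, smul_eq_mul]

theorem exists_eq_add_zsmul_of_map_eq (hσ : IsDPT K N a b σ) (hKa : IsCoprime K a)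
    (hm : a * N - b * K ≠ 0) {p q : ℤ × ℤ} (h : σ p = σ q) : ∃ i : ℤ, q = p + i • (K, -N) := by
  obtain ⟨u, w, huw⟩ := hKa
  have : NeZero (a * N - b * K).natAbs := ⟨Int.natAbs_ne_zero.mpr hm⟩
  -- `ρ` induces the isomorphism `ℤ² / Λ ≅ ℤ/m`.
  let ρ : ℤ × ℤ → ZMod (a * N - b * K).natAbs := fun q ↦ ((u * N + w * b) * q.1 + q.2 : ℤ)
  have hlattice : ∀ p q, ρ p = ρ q → ∃ i j : ℤ, q = p + i • (K, -N) + j • (a, -b) := by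
    intro p q hpq
    obtain ⟨t, ht⟩ := Int.natAbs_dvd.mp ((ZMod.intCast_eq_intCast_iff_dvd_sub _ _ _).mp hpq)
    refine ⟨(q.1 - p.1) * u - t * a, (q.1 - p.1) * w + t * K, Prod.ext ?_ ?_⟩
    · simp only [Prod.fst_add, Prod.smul_fst, smul_eq_mul]
      linear_combination (p.1 - q.1) * huw
    · simp only [Prod.snd_add, Prod.smul_snd, smul_eq_mul]
      linear_combination ht
  have hσρ : FactorsThrough (fun q ↦ (σ q : ZMod (a * N - b * K).natAbs)) ρ := by
    intro p q hpq
    obtain ⟨i, j, rfl⟩ := hlattice p q hpq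
    have hm0 : ((a * N - b * K : ℤ) : ZMod (a * N - b * K).natAbs) = 0 :=
      (ZMod.intCast_zmod_eq_zero_iff_dvd _ _).mpr (Int.natAbs_dvd.mpr dvd_rfl)
    simp only [hσ.map_add_lattice, Int.cast_add, Int.cast_mul, hm0, mul_zero, add_zero]
  have hσsurj : Surjective fun q ↦ (σ q : ZMod (a * N - b * K).natAbs) :=
    ZMod.intCast_surjective.comp hσ.1
  obtain ⟨i, j, rfl⟩ := hlattice p q (hσρ.symm_of_surjective hσsurj (congrArg _ h))
  have hj : j = 0 := by
    rw [hσ.map_add_lattice] at h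
    simpa [hm] using h
  exact ⟨i, by simp [hj]⟩

theorem exists_map_eq_iff_columnClass (hσ : IsDPT K N a b σ) (hKa : IsCoprime K a)
    (hm : a * N - b * K ≠ 0) (x v : ℤ) :
    (∃ y, σ (x, y) = v) ↔ (x : ZMod K.natAbs) = columnClass K σ v := by
  have hK0 : (K : ZMod K.natAbs) = 0 :=
    (ZMod.intCast_zmod_eq_zero_iff_dvd _ _).mpr (Int.natAbs_dvd.mpr dvd_rfl)
  have hv : σ (invFun σ v) = v := invFun_eq (hσ.1 v)
  constructor
  · rintro ⟨y, rfl⟩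
    obtain ⟨i, hi⟩ := hσ.exists_eq_add_zsmul_of_map_eq hKa hm hv.symm
    simp [columnClass, hi, hK0]
  · intro hx
    obtain ⟨i, hi⟩ := Int.natAbs_dvd.mp ((ZMod.intCast_eq_intCast_iff_dvd_sub _ _ _).mp hx)
    refine ⟨(invFun σ v).2 + i * N, ?_⟩
    have hp : invFun σ v + (-i) • (K, -N) + (0 : ℤ) • (a, -b) = (x, (invFun σ v).2 + i * N) :=
      Prod.ext (by simp only [Prod.fst_add, Prod.smul_fst, smul_eq_mul]; linear_combination hi)
        (by simp)
    rw [← hp, hσ.map_add_lattice, hv, zero_mul, add_zero]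

theorem columnClass_add_period (hσ : IsDPT K N a b σ) (hKa : IsCoprime K a)
    (hm : a * N - b * K ≠ 0) (v : ℤ) :
    columnClass K σ (v + (a * N - b * K)) = columnClass K σ v + a := by
  have hv : σ (invFun σ v) = v := invFun_eq (hσ.1 v)
  have hmem : ∃ y, σ ((invFun σ v).1 + a, y) = v + (a * N - b * K) :=
    ⟨(invFun σ v).2 - b, by rw [hσ.2.2.1, hv]⟩
  rw [← (hσ.exists_map_eq_iff_columnClass hKa hm _ _).mp hmem, columnClass, Int.cast_add]

theorem columnClass_zero (hσ : IsDPT K N a b σ) (hKa : IsCoprime K a)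
    (hm : a * N - b * K ≠ 0) (h0 : σ (0, 0) = 0) : columnClass K σ 0 = 0 := by
  simpa using ((hσ.exists_map_eq_iff_columnClass hKa hm 0 0).mp ⟨0, h0⟩).symm

theorem eq_of_map_zero_eq (hσ : IsDPT K N a b σ) (hτ : IsDPT K N a b τ) (hKa : IsCoprime K a)
    (h : ∀ y, σ (0, y) = τ (0, y)) : σ = τ := by
  obtain ⟨u, w, huw⟩ := hKa
  funext ⟨x, y⟩
  have hxy : ((0 : ℤ), y + x * u * N + x * w * b) + (x * u) • (K, -N) + (x * w) • (a, -b)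
      = (x, y) :=
    Prod.ext (by simp only [Prod.fst_add, Prod.smul_fst, smul_eq_mul]; linear_combination x * huw)
      (by simp only [Prod.snd_add, Prod.smul_snd, smul_eq_mul]; ring)
  rw [← hxy, hσ.map_add_lattice, hτ.map_add_lattice, h]

theorem eq_of_columnClass_eqOn (hσ : IsDPT K N a b σ) (hτ : IsDPT K N a b τ)
    (hKa : IsCoprime K a) (hm : 0 < a * N - b * K) (hσ0 : σ (0, 0) = 0) (hτ0 : τ (0, 0) = 0)
    (h : Set.EqOn (columnClass K σ) (columnClass K τ) (Set.Ioo 0 (a * N - b * K))) :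
    σ = τ := by
  have hper : Periodic (columnClass K σ - columnClass K τ) (a * N - b * K) := fun v ↦ by
    simp [hσ.columnClass_add_period hKa hm.ne', hτ.columnClass_add_period hKa hm.ne']
  have hcol : columnClass K σ = columnClass K τ := funext fun v ↦ by
    have hmod := hper.sub_int_mul_eq (x := v) (v / (a * N - b * K))
    rw [Int.cast_id, mul_comm, ← Int.emod_def] at hmod
    rw [← sub_eq_zero, ← Pi.sub_apply, ← hmod, Pi.sub_apply, sub_eq_zero]
    rcases (Int.emod_nonneg v hm.ne').eq_or_lt with hv | hv
    · rw [← hv, hσ.columnClass_zero hKa hm.ne' hσ0, hτ.columnClass_zero hKa hm.ne' hτ0]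
    · exact h ⟨hv, Int.emod_lt_of_pos v hm⟩
  apply hσ.eq_of_map_zero_eq hτ hKa
  have hrange : Set.range (fun y ↦ σ (0, y)) = Set.range (fun y ↦ τ (0, y)) := by
    ext v
    rw [Set.mem_range, Set.mem_range, hσ.exists_map_eq_iff_columnClass hKa hm.ne',
      hτ.exists_map_eq_iff_columnClass hKa hm.ne', hcol]
  exact congrFun <| StrictMono.eq_of_range_eq (strictMono_int_of_lt_succ fun y ↦ hσ.2.2.2.2 0 y)
    (strictMono_int_of_lt_succ fun y ↦ hτ.2.2.2.2 0 y) hrange (hσ0.trans hτ0.symm)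

end IsDPT

theorem dpt_count_upper_bound_general (K N a b : ℤ) (hK : 0 < K)
    (hm : 0 < a * N - b * K) (hgcd : Int.gcd K a = 1) :
    {σ : ℤ × ℤ → ℤ | IsDPT K N a b σ ∧ σ (0, 0) = 0}.Finite ∧
    (({σ : ℤ × ℤ → ℤ | IsDPT K N a b σ ∧ σ (0, 0) = 0}.ncard : ℤ)
      ≤ K ^ (a * N - b * K - 1).toNat) := by
  have hKa : IsCoprime K a := Int.isCoprime_iff_gcd_eq_one.mpr hgcd
  have : NeZero K.natAbs := ⟨by omega⟩
  let F (σ : ℤ × ℤ → ℤ) (i : Fin (a * N - b * K - 1).toNat) : ZMod K.natAbs :=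
    columnClass K σ (i + 1)
  have hF : {σ : ℤ × ℤ → ℤ | IsDPT K N a b σ ∧ σ (0, 0) = 0}.InjOn F :=
    fun σ hσ τ hτ hστ ↦ hσ.1.eq_of_columnClass_eqOn hτ.1 hKa hm hσ.2 hτ.2 fun v ⟨hv0, hvm⟩ ↦ by
      have hi : columnClass K σ ((v - 1).toNat + 1) = columnClass K τ ((v - 1).toNat + 1) :=
        congrFun hστ ⟨(v - 1).toNat, by omega⟩
      rwa [show ((v - 1).toNat : ℤ) + 1 = v by omega] at hi
  refine ⟨Set.Finite.of_injOn (Set.mapsTo_univ _ _) hF Set.finite_univ, ?_⟩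
  have hcard := Set.ncard_le_ncard_of_injOn F (fun _ _ ↦ Set.mem_univ _) hF
  rw [Set.ncard_univ, Nat.card_fun, Nat.card_zmod, Nat.card_fin] at hcard
  calc _ ≤ ((K.natAbs ^ (a * N - b * K - 1).toNat : ℕ) : ℤ) := by exact_mod_cast hcard
    _ = K ^ (a * N - b * K - 1).toNat := by rw [Nat.cast_pow, Int.natCast_natAbs, abs_of_pos hK]

/-- If `gcd(K, a) = 1`, the set of `σ ∈ DPT(K,N,a,b)` with `σ(0,0) = 0` — i.e.
`DPT(K,N,a,b)` up to translations — is finite with at most `K^(m−1)` elements,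
where `m = a*N − b*K`. -/
theorem dpt_count_upper_bound (K N a b : ℤ) (hK : 0 < K) (hN : 0 < N)
    (hm : 0 < a * N - b * K) (hgcd : Int.gcd K a = 1) :
    {σ : ℤ × ℤ → ℤ | IsDPT K N a b σ ∧ σ (0, 0) = 0}.Finite ∧
    (({σ : ℤ × ℤ → ℤ | IsDPT K N a b σ ∧ σ (0, 0) = 0}.ncard : ℤ)
      ≤ K ^ (a * N - b * K - 1).toNat) :=
  dpt_count_upper_bound_general K N a b hK hm hgcd
end

section
/- Fix integers K, N, a, b with m = a*N − b*K > 0. Define two equivalence relations on DPT(K,N,a,b): σ ≈ τ if and only if there exist i, j ∈ ℤ with τ(x,y) = σ(x−i, y−j) for all (x,y) ∈ ℤ² (the ⟨D,L⟩-equivalence by translations), and σ ∼ τ if and only if there exists c ∈ ℤ with τ(x,y) = σ(x,y) + c for all (x,y) ∈ ℤ² (the ⟨π⟩-equivalence by adding constants). Then there is a bijection between the quotient sets DPT(K,N,a,b)/≈ and DPT(K,N,a,b)/∼. -/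
/-- Translation equivalence (the `⟨D,L⟩`-action): `σ ≈ τ` iff
`τ(x,y) = σ(x−i, y−j)` for some `i, j ∈ ℤ`. -/
def transRel (K N a b : ℤ)
    (σ τ : {σ : ℤ × ℤ → ℤ // IsDPT K N a b σ}) : Prop :=
  ∃ i j : ℤ, ∀ x y : ℤ, τ.1 (x, y) = σ.1 (x - i, y - j)

/-- Constant-shift equivalence (the `⟨π⟩`-action): `σ ∼ τ` iff
`τ(x,y) = σ(x,y) + c` for some `c ∈ ℤ`. -/
def shiftRel (K N a b : ℤ)
    (σ τ : {σ : ℤ × ℤ → ℤ // IsDPT K N a b σ}) : Prop :=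
  ∃ c : ℤ, ∀ x y : ℤ, τ.1 (x, y) = σ.1 (x, y) + c

/- Both quotients are in bijection with the set of tableaux satisfying `σ (0,0) = 0`. Each shift
class contains exactly one of them. A translation class meets this set in the translates
`σ (· + u)` with `σ u = 0`, and these all coincide, because `σ p = σ q` makes `p - q` a period
of `σ`. Indeed, `σ mod m` induces a surjection from `ℤ²` modulo the lattice `L` spanned by
`(K, -N)` and `(a, -b)` onto `ZMod m`. As `L` has index `m` this is a bijection, so
`p - q = s (K, -N) + t (a, -b)`, and `σ p = σ q + t m` forces `t = 0`. -/

open Function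

noncomputable def Quot.equivOfSurjective {α β : Type*} {r : α → α → Prop} (f : α → β)
    (hf : Surjective f) (hr : ∀ x y, r x y ↔ f x = f y) : Quot r ≃ β :=
  (Quot.congrRight hr).trans (Setoid.quotientKerEquivOfSurjective f hf)

section Lattice

variable (v w : ℤ × ℤ)

def latticeMap : ℤ × ℤ →ₗ[ℤ] ℤ × ℤ :=
  (LinearMap.toSpanSingleton ℤ _ v).coprod (LinearMap.toSpanSingleton ℤ _ w)

@[simp] lemma latticeMap_apply (s t : ℤ) : latticeMap v w (s, t) = s • v + t • w := rfl

lemma det_latticeMap : LinearMap.det (latticeMap v w) = v.1 * w.2 - v.2 * w.1 := by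
  rw [← LinearMap.det_toMatrix (Module.Basis.finTwoProd ℤ), Matrix.det_fin_two]
  simp [LinearMap.toMatrix_apply]
  ring

variable {v w}

lemma latticeMap_injective (hd : v.1 * w.2 - v.2 * w.1 ≠ 0) : Injective (latticeMap v w) := by
  rw [← LinearMap.ker_eq_bot, LinearMap.ker_eq_bot']
  rintro ⟨s, t⟩ h
  simp only [latticeMap_apply, Prod.ext_iff, Prod.fst_add, Prod.snd_add, Prod.smul_fst,
    Prod.smul_snd, smul_eq_mul, Prod.fst_zero, Prod.snd_zero] at h
  have hs : s * (v.1 * w.2 - v.2 * w.1) = 0 := by linear_combination w.2 * h.1 - w.1 * h.2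
  have ht : t * (v.1 * w.2 - v.2 * w.1) = 0 := by linear_combination v.1 * h.2 - v.2 * h.1
  simp [(mul_eq_zero.mp hs).resolve_right hd, (mul_eq_zero.mp ht).resolve_right hd]

lemma card_quotient_range_latticeMap (hd : v.1 * w.2 - v.2 * w.1 ≠ 0) :
    Nat.card ((ℤ × ℤ) ⧸ LinearMap.range (latticeMap v w)) =
      (v.1 * w.2 - v.2 * w.1).natAbs := by
  rw [← Submodule.natAbs_det_equiv _ (LinearEquiv.ofInjective _ (latticeMap_injective hd)),
    ← det_latticeMap]
  rfl

variable {σ : ℤ × ℤ → ℤ}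

lemma apply_add_latticeMap {c : ℤ} (hv : ∀ z, σ (z + v) = σ z)
    (hw : ∀ z, σ (z + w) = σ z + c)
    (z : ℤ × ℤ) (s t : ℤ) : σ (z + latticeMap v w (s, t)) = σ z + t * c := by
  have hv' :=
    AddConstMapClass.map_add_zsmul (⟨σ, by simpa using hv⟩ : AddConstMap (ℤ × ℤ) ℤ v 0)
  have hw' := AddConstMapClass.map_add_zsmul (⟨σ, hw⟩ : AddConstMap (ℤ × ℤ) ℤ w c)
  simp only [AddConstMap.coe_mk, smul_eq_mul, mul_zero, add_zero] at hv' hw'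
  rw [latticeMap_apply, add_comm (s • v), ← add_assoc, hv', hw']

lemma sub_mem_range_latticeMap_of_apply_eq (hσ : Surjective σ) (hv : ∀ z, σ (z + v) = σ z)
    (hw : ∀ z, σ (z + w) = σ z + (v.1 * w.2 - v.2 * w.1)) (hd : v.1 * w.2 - v.2 * w.1 ≠ 0)
    {p q : ℤ × ℤ} (hpq : σ p = σ q) : p - q ∈ LinearMap.range (latticeMap v w) := by
  set n := (v.1 * w.2 - v.2 * w.1).natAbs
  let F : (ℤ × ℤ) ⧸ LinearMap.range (latticeMap v w) → ZMod n :=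
    Quotient.lift (fun z => (σ z : ZMod n)) fun z z' hzz' => by
      obtain ⟨⟨s, t⟩, hst⟩ := (Submodule.quotientRel_def _).mp hzz'
      rw [← sub_add_cancel z z', add_comm, ← hst, apply_add_latticeMap hv hw]
      simp [n, (ZMod.intCast_zmod_eq_zero_iff_dvd _ _).mpr (Int.natAbs_dvd.mpr dvd_rfl)]
  have hF : Surjective F := fun x => by
    obtain ⟨k, rfl⟩ := ZMod.intCast_surjective x
    obtain ⟨z, rfl⟩ := hσ k
    exact ⟨Submodule.Quotient.mk z, rfl⟩
  have hcard := card_quotient_range_latticeMap hd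
  have : Finite ((ℤ × ℤ) ⧸ LinearMap.range (latticeMap v w)) :=
    Nat.finite_of_card_ne_zero (by simpa [hcard] using hd)
  have hF_inj := (hF.bijective_of_nat_card_le (by rw [hcard, Nat.card_zmod])).injective
  exact (Submodule.Quotient.eq _).mp (@hF_inj (Submodule.Quotient.mk p) (Submodule.Quotient.mk q)
    (congrArg (fun k : ℤ => (k : ZMod n)) hpq))

theorem apply_add_eq_of_apply_eq_of_quasiperiodic (hσ : Surjective σ)
    (hv : ∀ z, σ (z + v) = σ z) (hw : ∀ z, σ (z + w) = σ z + (v.1 * w.2 - v.2 * w.1))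
    (hd : v.1 * w.2 - v.2 * w.1 ≠ 0) {p q : ℤ × ℤ} (hpq : σ p = σ q) (z : ℤ × ℤ) :
    σ (z + p) = σ (z + q) := by
  obtain ⟨⟨s, t⟩, hst⟩ := sub_mem_range_latticeMap_of_apply_eq hσ hv hw hd hpq
  have hp : p = q + latticeMap v w (s, t) := by rw [hst, add_sub_cancel]
  have ht : t = 0 := by
    rw [hp, apply_add_latticeMap hv hw, add_eq_left, mul_eq_zero] at hpq
    exact hpq.resolve_right hd
  rw [hp, ← add_assoc, apply_add_latticeMap hv hw, ht, zero_mul, add_zero]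

end Lattice

section Tableaux

variable {K N a b : ℤ}

theorem isDPT_iff {σ : ℤ × ℤ → ℤ} : IsDPT K N a b σ ↔ Surjective σ ∧
    (∀ z, σ (z + (K, -N)) = σ z) ∧ (∀ z, σ (z + (a, -b)) = σ z + (a * N - b * K)) ∧
    (∀ z, σ z < σ (z + (1, 0))) ∧ ∀ z, σ z < σ (z + (0, 1)) := by
  simp only [IsDPT, Prod.forall, Prod.mk_add_mk, add_zero, sub_eq_add_neg]

namespace IsDPT

variable {σ : ℤ × ℤ → ℤ}

theorem apply_add_eq_of_apply_eq (h : IsDPT K N a b σ) (hm : a * N - b * K ≠ 0)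
    {p q : ℤ × ℤ} (hpq : σ p = σ q) (z : ℤ × ℤ) : σ (z + p) = σ (z + q) := by
  obtain ⟨hσ, hK, ha, -⟩ := isDPT_iff.mp h
  have hd : K * -b - -N * a ≠ 0 := by contrapose! hm; linear_combination hm
  exact apply_add_eq_of_apply_eq_of_quasiperiodic hσ hK (fun z => by rw [ha]; ring) hd hpq z

theorem comp_add_right (h : IsDPT K N a b σ) (u : ℤ × ℤ) :
    IsDPT K N a b (fun z => σ (z + u)) := by
  obtain ⟨hσ, hK, ha, hx, hy⟩ := isDPT_iff.mp h
  refine isDPT_iff.mpr ⟨hσ.comp (add_right_surjective u), fun z => ?_, fun z => ?_,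
    fun z => ?_, fun z => ?_⟩ <;> simp only [add_right_comm _ _ u]
  exacts [hK _, ha _, hx _, hy _]

theorem add_const (h : IsDPT K N a b σ) (c : ℤ) : IsDPT K N a b (fun z => σ z + c) := by
  obtain ⟨hσ, hK, ha, hx, hy⟩ := h
  refine ⟨(add_right_surjective c).comp hσ, fun x y => ?_, fun x y => ?_, fun x y => ?_,
    fun x y => ?_⟩
  · simp only [hK]
  · simp only [ha, add_right_comm]
  · simpa using hx x y
  · simpa using hy x y

end IsDPT

abbrev DPT (K N a b : ℤ) := {σ : ℤ × ℤ → ℤ // IsDPT K N a b σ}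

namespace DPT

def translate (σ : DPT K N a b) (u : ℤ × ℤ) : DPT K N a b :=
  ⟨fun z => σ.1 (z + u), σ.2.comp_add_right u⟩

def addConst (σ : DPT K N a b) (c : ℤ) : DPT K N a b :=
  ⟨fun z => σ.1 z + c, σ.2.add_const c⟩

noncomputable def zeroCell (σ : DPT K N a b) : ℤ × ℤ := (σ.2.1 0).choose

lemma apply_zeroCell (σ : DPT K N a b) : σ.1 σ.zeroCell = 0 := (σ.2.1 0).choose_spec

def normalizeShift (σ : DPT K N a b) : {τ : DPT K N a b // τ.1 0 = 0} :=
  ⟨σ.addConst (-σ.1 0), add_neg_cancel _⟩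

noncomputable def normalizeTranslate (σ : DPT K N a b) : {τ : DPT K N a b // τ.1 0 = 0} :=
  ⟨σ.translate σ.zeroCell, by simp only [translate, zero_add, apply_zeroCell]⟩

lemma shiftRel_iff {σ τ : DPT K N a b} :
    shiftRel K N a b σ τ ↔ σ.normalizeShift = τ.normalizeShift := by
  simp only [shiftRel, normalizeShift, addConst, Subtype.ext_iff, funext_iff, Prod.forall]
  constructor
  · rintro ⟨c, h⟩ x y
    simp only [h]; ring
  · intro h
    exact ⟨τ.1 0 - σ.1 0, fun x y => by linarith [h x y]⟩

lemma transRel_iff_exists {σ τ : DPT K N a b} :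
    transRel K N a b σ τ ↔ ∃ u, ∀ z, τ.1 z = σ.1 (z - u) :=
  ⟨fun ⟨i, j, h⟩ => ⟨(i, j), fun z => h z.1 z.2⟩,
    fun ⟨u, h⟩ => ⟨u.1, u.2, fun x y => h (x, y)⟩⟩

lemma transRel_iff (hm : a * N - b * K ≠ 0) {σ τ : DPT K N a b} :
    transRel K N a b σ τ ↔ σ.normalizeTranslate = τ.normalizeTranslate := by
  simp only [transRel_iff_exists, normalizeTranslate, translate, Subtype.ext_iff, funext_iff]
  constructor
  · rintro ⟨u, h⟩ z
    have hcell : σ.1 (τ.zeroCell - u) = σ.1 σ.zeroCell := by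
      rw [← h, apply_zeroCell, apply_zeroCell]
    rw [h, add_sub_assoc, σ.2.apply_add_eq_of_apply_eq hm hcell]
  · intro h
    refine ⟨τ.zeroCell - σ.zeroCell, fun z => ?_⟩
    rw [sub_sub_eq_add_sub, ← sub_add_eq_add_sub, h, sub_add_cancel]

lemma normalizeShift_surjective : Surjective (@normalizeShift K N a b) :=
  fun τ => ⟨τ, by simp [normalizeShift, addConst, τ.2]⟩

lemma normalizeTranslate_surjective (hm : a * N - b * K ≠ 0) :
    Surjective (@normalizeTranslate K N a b) := fun τ => by
  refine ⟨τ, Subtype.ext (Subtype.ext (funext fun z => ?_))⟩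
  have hcell : τ.1.1 τ.1.zeroCell = τ.1.1 0 := by rw [apply_zeroCell, τ.2]
  simpa [normalizeTranslate, translate] using τ.1.2.apply_add_eq_of_apply_eq hm hcell z

end DPT

end Tableaux

/-- There is a bijection between `DPT(K,N,a,b)/⟨D,L⟩` (the quotient by
translations) and `DPT(K,N,a,b)/⟨π⟩` (the quotient by adding constants). -/
theorem dpt_quotients_bijection (K N a b : ℤ) (hm : 0 < a * N - b * K) :
    Nonempty (Quot (transRel K N a b) ≃ Quot (shiftRel K N a b)) :=
  ⟨(Quot.equivOfSurjective _ (DPT.normalizeTranslate_surjective hm.ne')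
      fun _ _ => DPT.transRel_iff hm.ne').trans
    (Quot.equivOfSurjective _ DPT.normalizeShift_surjective fun _ _ => DPT.shiftRel_iff).symm⟩
end
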